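/- Let c ∈ ℚ^E be the perturbed cost vector with c(e) = 1 + 2^{-rank(e)} on a finite edge set E. Then for any two cycles (subsets) S, T ⊆ E: Σ_{e∈S} c(e) > Σ_{e∈T} c(e) if and only if either |S| > |T|, or |S| = |T| and the smallest-rank element of the symmetric difference S △ T belongs to S. -/
import Mathlib


/-- The rank (1-based position) of an element in a finite linearly ordered set. -/
def rank {E : Type*} [Fintype E] [LinearOrder E] (e : E) : ℕ :=
  (Finset.univ.filter (fun f => f ≤ e)).card

lemma geom_Ioc_eq (m M : ℕ) (h : m ≤ M) :
    ∑ k ∈ Finset.Ioc m M, ((1 : ℚ) / 2) ^ k = (1 / 2) ^ m - (1 / 2) ^ M := by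
  induction M, h using Nat.le_induction with
  | base => simp
  | succ M hM ih =>
    rw [Finset.sum_Ioc_succ_top (by omega), ih, pow_succ]
    ring

lemma myGeomLt (s : Finset ℕ) (m : ℕ) (h : ∀ k ∈ s, m < k) :
    ∑ k ∈ s, ((1 : ℚ) / 2) ^ k < (1 / 2) ^ m := by
  rcases s.eq_empty_or_nonempty with rfl | hs
  · simp
  · set M := s.max' hs with hMdef
    have hmM : m ≤ M := le_of_lt (h _ (s.max'_mem hs))
    have hsub : s ⊆ Finset.Ioc m M := by
      intro k hk
      exact Finset.mem_Ioc.mpr ⟨h k hk, s.le_max' k hk⟩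
    calc ∑ k ∈ s, ((1 : ℚ) / 2) ^ k
        ≤ ∑ k ∈ Finset.Ioc m M, ((1 : ℚ) / 2) ^ k := by
          apply Finset.sum_le_sum_of_subset_of_nonneg hsub
          intro i _ _; positivity
      _ = (1 / 2) ^ m - (1 / 2) ^ M := geom_Ioc_eq m M hmM
      _ < (1 / 2) ^ m := by
          have : (0 : ℚ) < (1 / 2) ^ M := by positivity
          linarith

lemma rank_strictMono {E : Type*} [Fintype E] [LinearOrder E] :
    StrictMono (rank (E := E)) := by
  intro a b hab
  apply Finset.card_lt_card
  constructor
  · intro x hx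
    simp only [Finset.mem_filter, Finset.mem_univ, true_and] at hx ⊢
    exact hx.trans hab.le
  · intro hsub
    have := hsub (by simp : b ∈ Finset.univ.filter (fun f => f ≤ b))
    simp only [Finset.mem_filter, Finset.mem_univ, true_and] at this
    exact absurd this (not_le.mpr hab)

lemma myRankPos {E : Type*} [Fintype E] [LinearOrder E] (e : E) : 0 < rank e :=
  Finset.card_pos.mpr ⟨e, by simp [rank]⟩

lemma pert_lt_pert {E : Type*} [Fintype E] [LinearOrder E]
    (A B : Finset E) (e : E) (he : e ∈ A) (h : ∀ f ∈ B, rank e < rank f) :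
    ∑ f ∈ B, ((1 : ℚ) / 2) ^ rank f < ∑ f ∈ A, ((1 : ℚ) / 2) ^ rank f := by
  have h1 : ∑ f ∈ B, ((1 : ℚ) / 2) ^ rank f
      = ∑ k ∈ B.image rank, ((1 : ℚ) / 2) ^ k := by
    rw [Finset.sum_image]
    intro x _ y _ hxy
    exact rank_strictMono.injective hxy
  have h2 : ∑ k ∈ B.image rank, ((1 : ℚ) / 2) ^ k < (1 / 2) ^ rank e := by
    apply myGeomLt
    intro k hk
    obtain ⟨f, hf, rfl⟩ := Finset.mem_image.mp hk
    exact h f hf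
  have h3 : ((1 : ℚ) / 2) ^ rank e ≤ ∑ f ∈ A, ((1 : ℚ) / 2) ^ rank f := by
    apply Finset.single_le_sum (f := fun f => ((1 : ℚ) / 2) ^ rank f) _ he
    intro i _; positivity
  linarith [h1 ▸ h2]

lemma pert_nonneg {E : Type*} [Fintype E] [LinearOrder E] (A : Finset E) :
    (0 : ℚ) ≤ ∑ f ∈ A, ((1 : ℚ) / 2) ^ rank f := by
  apply Finset.sum_nonneg; intro i _; positivity

lemma pert_lt_one {E : Type*} [Fintype E] [LinearOrder E] (A : Finset E) :
    ∑ f ∈ A, ((1 : ℚ) / 2) ^ rank f < 1 := by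
  have h1 : ∑ f ∈ A, ((1 : ℚ) / 2) ^ rank f
      = ∑ k ∈ A.image rank, ((1 : ℚ) / 2) ^ k := by
    rw [Finset.sum_image]
    intro x _ y _ hxy
    exact rank_strictMono.injective hxy
  have h2 : ∑ k ∈ A.image rank, ((1 : ℚ) / 2) ^ k < (1 / 2) ^ 0 := by
    apply myGeomLt
    intro k hk
    obtain ⟨f, _, rfl⟩ := Finset.mem_image.mp hk
    exact myRankPos f
  rw [h1]
  simpa using h2

theorem perturbed_cost_order_characterization
    {E : Type*} [Fintype E] [LinearOrder E]
    (S T : Finset E) (hne : S ≠ T) :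
    (∑ e ∈ S, (1 + ((1 : ℚ) / 2) ^ rank e) > ∑ e ∈ T, (1 + ((1 : ℚ) / 2) ^ rank e)) ↔
      (S.card > T.card ∨
        (S.card = T.card ∧ ∃ e ∈ S \ T, ∀ f ∈ symmDiff S T, e ≤ f)) := by
  set pS := ∑ f ∈ S, ((1 : ℚ) / 2) ^ rank f with hpS
  set pT := ∑ f ∈ T, ((1 : ℚ) / 2) ^ rank f with hpT
  have hsumS : ∑ e ∈ S, (1 + ((1 : ℚ) / 2) ^ rank e) = (S.card : ℚ) + pS := by
    rw [Finset.sum_add_distrib, Finset.sum_const, nsmul_eq_mul, mul_one, hpS]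
  have hsumT : ∑ e ∈ T, (1 + ((1 : ℚ) / 2) ^ rank e) = (T.card : ℚ) + pT := by
    rw [Finset.sum_add_distrib, Finset.sum_const, nsmul_eq_mul, mul_one, hpT]
  have hdecS : ∑ f ∈ S ∩ T, ((1 : ℚ) / 2) ^ rank f
      + ∑ f ∈ S \ T, ((1 : ℚ) / 2) ^ rank f = pS :=
    Finset.sum_inter_add_sum_sdiff S T _
  have hdecT : ∑ f ∈ S ∩ T, ((1 : ℚ) / 2) ^ rank f
      + ∑ f ∈ T \ S, ((1 : ℚ) / 2) ^ rank f = pT := by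
    rw [Finset.inter_comm]
    exact Finset.sum_inter_add_sum_sdiff T S _
  have hpSnn := pert_nonneg S
  have hpTnn := pert_nonneg T
  have hpSlt := pert_lt_one S
  have hpTlt := pert_lt_one T
  rw [hsumS, hsumT]
  constructor
  · intro h
    rcases lt_trichotomy S.card T.card with hlt | heq | hgt
    · exfalso
      have : (S.card : ℚ) + 1 ≤ (T.card : ℚ) := by exact_mod_cast hlt
      linarith
    · right
      refine ⟨heq, ?_⟩
      have hpp : pT < pS := by
        have : (S.card : ℚ) = T.card := by exact_mod_cast heq
        linarith
      have hsd : (symmDiff S T).Nonempty := by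
        rw [Finset.nonempty_iff_ne_empty]
        intro hc
        exact hne (by simpa [symmDiff_eq_bot] using hc)
      obtain ⟨e, hemem, hminle⟩ : ∃ e ∈ symmDiff S T, ∀ f ∈ symmDiff S T, e ≤ f :=
        ⟨(symmDiff S T).min' hsd, (symmDiff S T).min'_mem hsd,
          fun f hf => (symmDiff S T).min'_le f hf⟩
      rcases Finset.mem_symmDiff.mp hemem with ⟨heS, heT⟩ | ⟨heT, heS⟩
      · exact ⟨e, Finset.mem_sdiff.mpr ⟨heS, heT⟩, hminle⟩
      · exfalso
        have hkey : ∑ f ∈ S \ T, ((1 : ℚ) / 2) ^ rank f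
            < ∑ f ∈ T \ S, ((1 : ℚ) / 2) ^ rank f := by
          apply pert_lt_pert _ _ e (Finset.mem_sdiff.mpr ⟨heT, heS⟩)
          intro f hf
          have hfS : f ∈ S := (Finset.mem_sdiff.mp hf).1
          have hfsd : f ∈ symmDiff S T :=
            Finset.mem_symmDiff.mpr (Or.inl ⟨hfS, (Finset.mem_sdiff.mp hf).2⟩)
          have hle : e ≤ f := hminle f hfsd
          have hneq : e ≠ f := fun hc => heS (hc ▸ hfS)
          exact rank_strictMono (lt_of_le_of_ne hle hneq)
        linarith
    · exact Or.inl hgt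
  · rintro (hgt | ⟨heq, e, he, hmin⟩)
    · have : (T.card : ℚ) + 1 ≤ (S.card : ℚ) := by exact_mod_cast hgt
      linarith
    · have heS : e ∈ S := (Finset.mem_sdiff.mp he).1
      have heT : e ∉ T := (Finset.mem_sdiff.mp he).2
      have hkey : ∑ f ∈ T \ S, ((1 : ℚ) / 2) ^ rank f
          < ∑ f ∈ S \ T, ((1 : ℚ) / 2) ^ rank f := by
        apply pert_lt_pert _ _ e he
        intro f hf
        have hfT : f ∈ T := (Finset.mem_sdiff.mp hf).1
        have hfS : f ∉ S := (Finset.mem_sdiff.mp hf).2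
        have hfsd : f ∈ symmDiff S T :=
          Finset.mem_symmDiff.mpr (Or.inr ⟨hfT, hfS⟩)
        have hle : e ≤ f := hmin f hfsd
        have hneq : e ≠ f := fun hc => hfS (hc ▸ heS)
        exact rank_strictMono (lt_of_le_of_ne hle hneq)
      have : (S.card : ℚ) = T.card := by exact_mod_cast heq
      linarith
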